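/- arXiv:2506.19737 — 5 statements merged into one kernel-verified Lean document; each statement's English description precedes it below -/
import Mathlib

section
/- There exists a finite two-player 3×3 game in which every action of both players is rationalizable (survives iterated elimination of strictly dominated actions at every round), yet some action l of player 2 is not level-2 rationalizable under any anchor: for every anchor p, l ∉ L^2_2[p]. Hence the union over all anchors of the classic level-2 behavior of player 2 is a strict subset of R^2_2. -/
open Finset

/-- A probability distribution (as weights) on a finite set. -/
def IsDist {B : Type} [Fintype B] (ν : B → ℝ) : Prop :=
  (∀ b, 0 ≤ ν b) ∧ ∑ b, ν b = 1

/-- `a` is a best reply to the conjecture `ν` (weights on the co-player's actions). -/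
def isBR {A B : Type} [Fintype A] [Fintype B] (u : A → B → ℝ) (ν : B → ℝ) (a : A) : Prop :=
  ∀ a' : A, ∑ b, ν b * u a' b ≤ ∑ b, ν b * u a b

/-- `a` is strictly dominated by some mixed action. -/
def Dominated {A B : Type} [Fintype A] [Fintype B] (u : A → B → ℝ) (a : A) : Prop :=
  ∃ α : A → ℝ, IsDist α ∧ ∀ b : B, (∑ a', α a' * u a' b) > u a b

/-- One step of iterated elimination: best replies (within `S`) to conjectures on `T`. -/
def BRstep {A B : Type} [Fintype A] [Fintype B] (u : A → B → ℝ) (S : Set A) (T : Set B) :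
    Set A :=
  {a | a ∈ S ∧ ∃ ν : B → ℝ, IsDist ν ∧ (∀ b, ν b ≠ 0 → b ∈ T) ∧ isBR u ν a}

/-- `n`-rationalizability in the complete-information game. -/
def Rseq {A B : Type} [Fintype A] [Fintype B] (u1 : A → B → ℝ) (u2 : B → A → ℝ) :
    ℕ → Set A × Set B
  | 0 => (Set.univ, Set.univ)
  | n + 1 =>
    (BRstep u1 (Rseq u1 u2 n).1 (Rseq u1 u2 n).2,
     BRstep u2 (Rseq u1 u2 n).2 (Rseq u1 u2 n).1)

/-- Best replies to conjectures concentrated on `T`. -/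
def Lstep {A B : Type} [Fintype A] [Fintype B] (u : A → B → ℝ) (T : Set B) : Set A :=
  {a | ∃ ν : B → ℝ, IsDist ν ∧ (∀ b, ν b ≠ 0 → b ∈ T) ∧ isBR u ν a}

/-- The classic level-k solution under anchor `(p1, p2)`; `Lk … k` is level-`k` behavior
(meaningful for `k ≥ 1`). -/
def Lk {A B : Type} [Fintype A] [Fintype B] (u1 : A → B → ℝ) (u2 : B → A → ℝ)
    (p1 : A → ℝ) (p2 : B → ℝ) : ℕ → Set A × Set B
  | 0 => (Set.univ, Set.univ)
  | 1 => ({a | isBR u1 p2 a}, {b | isBR u2 p1 b})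
  | k + 2 =>
    (Lstep u1 (Lk u1 u2 p1 p2 (k + 1)).2,
     Lstep u2 (Lk u1 u2 p1 p2 (k + 1)).1)

/-- A Ĝ-conjecture over the co-player's (level-type, action) pairs: a finitely supported
type-marginal together with conditional action distributions. -/
structure GConj (B : Type) [Fintype B] where
  m : ℕ →₀ ℝ
  m_nonneg : ∀ t, 0 ≤ m t
  m_sum : (m.sum fun _ w => w) = 1
  cond : ℕ → B → ℝ
  cond_dist : ∀ t, IsDist (cond t)

/-- Marginal of a Ĝ-conjecture on the co-player's actions. -/
noncomputable def margAct {B : Type} [Fintype B] (μ : GConj B) : B → ℝ :=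
  fun b => μ.m.sum fun t w => w * μ.cond t b

/-- (K1): conditional on the co-player being of type 0 (if deemed possible),
play follows the anchor `q`. -/
def K1 {B : Type} [Fintype B] (q : B → ℝ) (μ : GConj B) : Prop :=
  μ.m 0 ≠ 0 → μ.cond 0 = q

/-- (K2): only co-player types strictly below `k` are deemed possible. -/
def K2 {B : Type} [Fintype B] (k : ℕ) (μ : GConj B) : Prop :=
  ∀ t, μ.m t ≠ 0 → t < k

/-- (KL): only the co-player type `k - 1` is deemed possible. -/
def KL {B : Type} [Fintype B] (k : ℕ) (μ : GConj B) : Prop :=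
  ∀ t, μ.m t ≠ 0 → t = k - 1

/-- Truncation `f^k` of the level distribution `f` at `k`. -/
noncomputable def ftrunc (f : ℕ → ℝ) (k t : ℕ) : ℝ :=
  f t / ∑ t' ∈ Finset.range k, f t'

/-- (KC): the type-marginal equals the truncation of `f` at `k`. -/
def KC {B : Type} [Fintype B] (f : ℕ → ℝ) (k : ℕ) (μ : GConj B) : Prop :=
  ∀ t < k, μ.m t = ftrunc f k t

/-- A full-support level distribution on ℕ. -/
def FullDist (f : ℕ → ℝ) : Prop :=
  (∀ t, 0 < f t) ∧ HasSum f 1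

/-- One step of Δ-rationalizability for one player, under belief restrictions `Δ`
(type-0 pairs always survive, since type-0 payoffs are constant). -/
def Dstep {A B : Type} [Fintype A] [Fintype B] (u : A → B → ℝ)
    (Δ : ℕ → GConj B → Prop) (S : Set (ℕ × A)) (T : Set (ℕ × B)) : Set (ℕ × A) :=
  {x | x ∈ S ∧ (x.1 = 0 ∨ ∃ μ : GConj B, Δ x.1 μ ∧
      (∀ t b, μ.m t ≠ 0 → μ.cond t b ≠ 0 → (t, b) ∈ T) ∧ isBR u (margAct μ) x.2)}

/-- Δ-rationalizability in the derived game with payoff uncertainty. -/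
def DeltaRat {A B : Type} [Fintype A] [Fintype B] (u1 : A → B → ℝ) (u2 : B → A → ℝ)
    (Δ1 : ℕ → GConj B → Prop) (Δ2 : ℕ → GConj A → Prop) :
    ℕ → Set (ℕ × A) × Set (ℕ × B)
  | 0 => (Set.univ, Set.univ)
  | n + 1 =>
    (Dstep u1 Δ1 (DeltaRat u1 u2 Δ1 Δ2 n).1 (DeltaRat u1 u2 Δ1 Δ2 n).2,
     Dstep u2 Δ2 (DeltaRat u1 u2 Δ1 Δ2 n).2 (DeltaRat u1 u2 Δ1 Δ2 n).1)

/-- Belief restrictions for downward rationalizability: (K1) and (K2). -/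
def DownR {B : Type} [Fintype B] (q : B → ℝ) : ℕ → GConj B → Prop :=
  fun k μ => K1 q μ ∧ K2 k μ

/-- Belief restrictions for L-rationalizability: (K1), (K2) and (KL). -/
def LR {B : Type} [Fintype B] (q : B → ℝ) : ℕ → GConj B → Prop :=
  fun k μ => K1 q μ ∧ K2 k μ ∧ KL k μ

/-- Belief restrictions for C-rationalizability: (K1), (K2) and (KC). -/
def CR {B : Type} [Fintype B] (q : B → ℝ) (f : ℕ → ℝ) : ℕ → GConj B → Prop :=
  fun k μ => K1 q μ ∧ K2 k μ ∧ KC f k μ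

section Sets

variable {A B : Type} [Fintype A] [Fintype B]

/-- `n`-downward-rationalizable actions of player 1's type `θ_{1,k}`. -/
def DSet (u1 : A → B → ℝ) (u2 : B → A → ℝ) (p1 : A → ℝ) (p2 : B → ℝ) (n k : ℕ) : Set A :=
  {a | (k, a) ∈ (DeltaRat u1 u2 (DownR p2) (DownR p1) n).1}

/-- `n`-downward-rationalizable actions of player 2's type `θ_{2,k}`. -/
def DSet2 (u1 : A → B → ℝ) (u2 : B → A → ℝ) (p1 : A → ℝ) (p2 : B → ℝ) (n k : ℕ) : Set B :=
  {b | (k, b) ∈ (DeltaRat u1 u2 (DownR p2) (DownR p1) n).2}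

def DSetInf (u1 : A → B → ℝ) (u2 : B → A → ℝ) (p1 : A → ℝ) (p2 : B → ℝ) (k : ℕ) : Set A :=
  ⋂ n, DSet u1 u2 p1 p2 n k

def DSet2Inf (u1 : A → B → ℝ) (u2 : B → A → ℝ) (p1 : A → ℝ) (p2 : B → ℝ) (k : ℕ) : Set B :=
  ⋂ n, DSet2 u1 u2 p1 p2 n k

/-- `n`-L-rationalizable actions of player 1's type `θ_{1,k}`. -/
def LSet (u1 : A → B → ℝ) (u2 : B → A → ℝ) (p1 : A → ℝ) (p2 : B → ℝ) (n k : ℕ) : Set A :=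
  {a | (k, a) ∈ (DeltaRat u1 u2 (LR p2) (LR p1) n).1}

/-- `n`-L-rationalizable actions of player 2's type `θ_{2,k}`. -/
def LSet2 (u1 : A → B → ℝ) (u2 : B → A → ℝ) (p1 : A → ℝ) (p2 : B → ℝ) (n k : ℕ) : Set B :=
  {b | (k, b) ∈ (DeltaRat u1 u2 (LR p2) (LR p1) n).2}

def LSetInf (u1 : A → B → ℝ) (u2 : B → A → ℝ) (p1 : A → ℝ) (p2 : B → ℝ) (k : ℕ) : Set A :=
  ⋂ n, LSet u1 u2 p1 p2 n k

def LSet2Inf (u1 : A → B → ℝ) (u2 : B → A → ℝ) (p1 : A → ℝ) (p2 : B → ℝ) (k : ℕ) : Set B :=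
  ⋂ n, LSet2 u1 u2 p1 p2 n k

/-- `n`-C-rationalizable actions of player 1's type `θ_{1,k}`. -/
def CSet (u1 : A → B → ℝ) (u2 : B → A → ℝ) (p1 : A → ℝ) (p2 : B → ℝ) (f : ℕ → ℝ)
    (n k : ℕ) : Set A :=
  {a | (k, a) ∈ (DeltaRat u1 u2 (CR p2 f) (CR p1 f) n).1}

/-- `n`-C-rationalizable actions of player 2's type `θ_{2,k}`. -/
def CSet2 (u1 : A → B → ℝ) (u2 : B → A → ℝ) (p1 : A → ℝ) (p2 : B → ℝ) (f : ℕ → ℝ)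
    (n k : ℕ) : Set B :=
  {b | (k, b) ∈ (DeltaRat u1 u2 (CR p2 f) (CR p1 f) n).2}

/-- The Cognitive Hierarchy solution: `CHsol … k` is CH level-`k` behavior (`k ≥ 1`). -/
def CHsol (u1 : A → B → ℝ) (u2 : B → A → ℝ) (p1 : A → ℝ) (p2 : B → ℝ) (f : ℕ → ℝ) :
    ℕ → Set A × Set B
  | 0 => (Set.univ, Set.univ)
  | 1 => ({a | isBR u1 p2 a}, {b | isBR u2 p1 b})
  | k + 2 =>
    ({a | ∃ μ : GConj B, K2 (k + 2) μ ∧ KC f (k + 2) μ ∧ K1 p2 μ ∧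
        (∀ t, 0 < t → ∀ _ : t < k + 2, ∀ b, μ.m t ≠ 0 → μ.cond t b ≠ 0 →
          b ∈ (CHsol u1 u2 p1 p2 f t).2) ∧
        isBR u1 (margAct μ) a},
     {b | ∃ μ : GConj A, K2 (k + 2) μ ∧ KC f (k + 2) μ ∧ K1 p1 μ ∧
        (∀ t, 0 < t → ∀ _ : t < k + 2, ∀ a, μ.m t ≠ 0 → μ.cond t a ≠ 0 →
          a ∈ (CHsol u1 u2 p1 p2 f t).1) ∧
        isBR u2 (margAct μ) b})
  termination_by k => k

end Sets

namespace Stmt11Aux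

noncomputable def U1 : Fin 3 → Fin 3 → ℝ := ![![6,0,0],![0,6,0],![4,4,4]]
noncomputable def U2 : Fin 3 → Fin 3 → ℝ := ![![3,3,0],![6,0,6],![0,6,6]]

noncomputable def pt (j : Fin 3) : Fin 3 → ℝ := fun b => if b = j then 1 else 0

lemma pt_dist (j : Fin 3) : IsDist (pt j) := by
  constructor
  · intro b; unfold pt; split <;> norm_num
  · fin_cases j <;> simp [pt, Fin.sum_univ_three]

lemma BRstep_univ : BRstep U1 (Set.univ : Set (Fin 3)) Set.univ = Set.univ := by
  ext a
  simp only [BRstep, Set.mem_setOf_eq, Set.mem_univ, true_and, iff_true]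
  fin_cases a
  · exact ⟨pt 0, pt_dist 0, fun b _ => trivial, by
      intro a'; fin_cases a' <;> simp [pt, isBR, U1, Fin.sum_univ_three] <;> norm_num⟩
  · exact ⟨pt 1, pt_dist 1, fun b _ => trivial, by
      intro a'; fin_cases a' <;> simp [pt, isBR, U1, Fin.sum_univ_three] <;> norm_num⟩
  · exact ⟨pt 2, pt_dist 2, fun b _ => trivial, by
      intro a'; fin_cases a' <;> simp [pt, isBR, U1, Fin.sum_univ_three] <;> norm_num⟩

noncomputable def half : Fin 3 → ℝ := ![1/2, 1/2, 0]

lemma half_dist : IsDist half := by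
  constructor
  · intro b; fin_cases b <;> norm_num [half]
  · norm_num [half, Fin.sum_univ_three, Matrix.cons_val_two, Matrix.tail_cons, Matrix.head_cons]

lemma BRstep2_univ : BRstep U2 (Set.univ : Set (Fin 3)) Set.univ = Set.univ := by
  ext b
  simp only [BRstep, Set.mem_setOf_eq, Set.mem_univ, true_and, iff_true]
  fin_cases b
  · exact ⟨half, half_dist, fun b _ => trivial, by
      intro a'; fin_cases a' <;> simp [half, isBR, U2, Fin.sum_univ_three] <;> norm_num⟩
  · exact ⟨pt 0, pt_dist 0, fun b _ => trivial, by
      intro a'; fin_cases a' <;> simp [pt, isBR, U2, Fin.sum_univ_three] <;> norm_num⟩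
  · exact ⟨pt 1, pt_dist 1, fun b _ => trivial, by
      intro a'; fin_cases a' <;> simp [pt, isBR, U2, Fin.sum_univ_three] <;> norm_num⟩

lemma Rseq_univ : ∀ n, Rseq U1 U2 n = (Set.univ, Set.univ) := by
  intro n
  induction n with
  | zero => rfl
  | succ n ih =>
    show (BRstep U1 (Rseq U1 U2 n).1 (Rseq U1 U2 n).2,
          BRstep U2 (Rseq U1 U2 n).2 (Rseq U1 U2 n).1) = _
    rw [ih]
    exact Prod.ext BRstep_univ BRstep2_univ

lemma not_level2 (p1 p2 : Fin 3 → ℝ) (h1 : IsDist p1) (h2 : IsDist p2) :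
    (0 : Fin 3) ∉ (Lk U1 U2 p1 p2 2).2 := by
  intro hmem
  obtain ⟨ν, ⟨hn, hs⟩, hsupp, hbr⟩ := hmem
  have hc := hbr 1
  have hr := hbr 2
  simp only [U2, Fin.sum_univ_three, Matrix.cons_val_zero, Matrix.cons_val_one,
    Matrix.head_cons, Matrix.cons_val_two, Matrix.tail_cons] at hc hr
  rw [Fin.sum_univ_three] at hs
  have hn0 := hn 0; have hn1 := hn 1; have hn2 := hn 2
  have hν2 : ν 2 = 0 := by linarith
  have hν0 : ν 0 = 1/2 := by linarith
  have hν1 : ν 1 = 1/2 := by linarith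
  have hU : (0 : Fin 3) ∈ (Lk U1 U2 p1 p2 1).1 := hsupp 0 (by rw [hν0]; norm_num)
  have hM : (1 : Fin 3) ∈ (Lk U1 U2 p1 p2 1).1 := hsupp 1 (by rw [hν1]; norm_num)
  have hUD := hU 2
  have hMD := hM 2
  simp only [U1, Fin.sum_univ_three, Matrix.cons_val_zero, Matrix.cons_val_one,
    Matrix.head_cons, Matrix.cons_val_two, Matrix.tail_cons] at hUD hMD
  obtain ⟨hp2n, hp2s⟩ := h2
  rw [Fin.sum_univ_three] at hp2s
  have := hp2n 0; have := hp2n 1; have := hp2n 2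
  linarith

end Stmt11Aux

/-- there is a 3×3 game where every action is rationalizable at every
round, yet some action of player 2 is not classic level-2 behavior under any anchor;
hence the union over all anchors of level-2 behavior is a strict subset of `R^2_2`. -/
theorem exists_rationalizable_not_robustly_level2 :
    ∃ u1 : Fin 3 → Fin 3 → ℝ, ∃ u2 : Fin 3 → Fin 3 → ℝ,
      (∀ n : ℕ, Rseq u1 u2 n = (Set.univ, Set.univ)) ∧
      ∃ l : Fin 3,
        (∀ p1 p2 : Fin 3 → ℝ, IsDist p1 → IsDist p2 → l ∉ (Lk u1 u2 p1 p2 2).2) ∧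
        {b : Fin 3 | ∃ p1 p2 : Fin 3 → ℝ, IsDist p1 ∧ IsDist p2 ∧
            b ∈ (Lk u1 u2 p1 p2 2).2}
          ⊂ (Rseq u1 u2 2).2 := by
  refine ⟨Stmt11Aux.U1, Stmt11Aux.U2, Stmt11Aux.Rseq_univ, 0,
    fun p1 p2 h1 h2 => Stmt11Aux.not_level2 p1 p2 h1 h2, ?_⟩
  have h2univ : (Rseq Stmt11Aux.U1 Stmt11Aux.U2 2).2 = Set.univ := by
    rw [Stmt11Aux.Rseq_univ 2]
  rw [h2univ, Set.ssubset_univ_iff]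
  intro h
  have : (0 : Fin 3) ∈ {b : Fin 3 | ∃ p1 p2 : Fin 3 → ℝ, IsDist p1 ∧ IsDist p2 ∧
      b ∈ (Lk Stmt11Aux.U1 Stmt11Aux.U2 p1 p2 2).2} := h ▸ Set.mem_univ _
  obtain ⟨p1, p2, h1, h2, hmem⟩ := this
  exact Stmt11Aux.not_level2 p1 p2 h1 h2 hmem
end

section
/- Foundation for the Cognitive Hierarchy model: fix an anchor p and a full-support level distribution f on ℕ₀. For every level k ≥ 1, every reasoning order n ≥ k, and every player i, the set of n-C-rationalizable actions of type θ_{i,k} equals CH^k_i[p, f], the CH level-k behavior of player i. -/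
open Finset

/-!
A C-rationalizability step at a type `k ≥ 1` is literally a CH step taken against
the co-player pairs that survived the previous round: (K1), (K2), (KC) are the CH constraints,
and the support condition at co-player type 0 is void because type-0 pairs always survive.
At level 1, (K2) forces the conjecture onto type 0, so (K1) makes its marginal the anchor.
Hence `CH^k ⊆ C^n` by induction on `n`, and `C^n ⊆ CH^k` for `n ≥ k` by strong induction
on `k`, since round `n` at type `k` only consults round `n - 1` at types `t < k ≤ n`.
-/

section CognitiveHierarchy

variable {A B : Type} [Fintype A] [Fintype B]

lemma zero_mem_DeltaRat (u1 : A → B → ℝ) (u2 : B → A → ℝ)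
    (Δ1 : ℕ → GConj B → Prop) (Δ2 : ℕ → GConj A → Prop) (n : ℕ) :
    (∀ a : A, ((0 : ℕ), a) ∈ (DeltaRat u1 u2 Δ1 Δ2 n).1) ∧
      ∀ b : B, ((0 : ℕ), b) ∈ (DeltaRat u1 u2 Δ1 Δ2 n).2 := by
  induction n with
  | zero => exact ⟨fun _ => Set.mem_univ _, fun _ => Set.mem_univ _⟩
  | succ n ih => exact ⟨fun a => ⟨ih.1 a, Or.inl rfl⟩, fun b => ⟨ih.2 b, Or.inl rfl⟩⟩

namespace GConj

lemma m_eq_single_of_K2_one {μ : GConj B} (h2 : K2 1 μ) : μ.m = Finsupp.single 0 1 := by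
  have hsingle : μ.m = Finsupp.single 0 (μ.m 0) := by
    ext t
    rcases Nat.eq_zero_or_pos t with rfl | ht
    · simp
    · rw [Finsupp.single_eq_of_ne (by omega)]
      by_contra h
      exact absurd (h2 t h) (by omega)
  have hsum := μ.m_sum
  rw [hsingle, Finsupp.sum_single_index rfl] at hsum
  rwa [hsum] at hsingle

lemma margAct_eq_of_K1_of_K2_one {q : B → ℝ} {μ : GConj B} (h1 : K1 q μ) (h2 : K2 1 μ) :
    margAct μ = q := by
  have hm := m_eq_single_of_K2_one h2
  have hcond : μ.cond 0 = q := h1 (by simp [hm])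
  funext b
  rw [margAct, hm, Finsupp.sum_single_index (zero_mul _), hcond, one_mul]

noncomputable def anchor (q : B → ℝ) (hq : IsDist q) : GConj B where
  m := Finsupp.single 0 1
  m_nonneg t := by
    rw [Finsupp.single_apply]
    split_ifs <;> norm_num
  m_sum := Finsupp.sum_single_index rfl
  cond _ := q
  cond_dist _ := hq

lemma anchor_CR_one (q : B → ℝ) (hq : IsDist q) {f : ℕ → ℝ} (hf0 : f 0 ≠ 0) :
    CR q f 1 (anchor q hq) := by
  refine ⟨fun _ => rfl, fun t ht => ?_, fun t ht => ?_⟩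
  · by_contra h
    exact ht (Finsupp.single_eq_of_ne (by omega))
  · obtain rfl : t = 0 := by omega
    simp [anchor, ftrunc, div_self hf0]

end GConj

def chStep (u : A → B → ℝ) (q : B → ℝ) (f : ℕ → ℝ) (k : ℕ) (T : ℕ → Set B) : Set A :=
  {a | ∃ μ : GConj B, K2 k μ ∧ KC f k μ ∧ K1 q μ ∧
    (∀ t, 0 < t → ∀ _ : t < k, ∀ b, μ.m t ≠ 0 → μ.cond t b ≠ 0 → b ∈ T t) ∧
    isBR u (margAct μ) a}

lemma chStep_mono {u : A → B → ℝ} {q : B → ℝ} {f : ℕ → ℝ} {k : ℕ} {T T' : ℕ → Set B}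
    (h : ∀ t, 0 < t → t < k → T t ⊆ T' t) : chStep u q f k T ⊆ chStep u q f k T' := by
  rintro a ⟨μ, h2, hC, h1, hsupp, hBR⟩
  exact ⟨μ, h2, hC, h1, fun t ht htk b hmt hcb => h t ht htk (hsupp t ht htk b hmt hcb), hBR⟩

lemma chStep_one (u : A → B → ℝ) {q : B → ℝ} (hq : IsDist q) {f : ℕ → ℝ} (hf0 : f 0 ≠ 0)
    (T : ℕ → Set B) : chStep u q f 1 T = {a | isBR u q a} := by
  ext a
  constructor
  · rintro ⟨μ, h2, -, h1, -, hBR⟩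
    rwa [GConj.margAct_eq_of_K1_of_K2_one h1 h2] at hBR
  · intro hBR
    obtain ⟨h1, h2, hC⟩ := GConj.anchor_CR_one q hq hf0
    refine ⟨GConj.anchor q hq, h2, hC, h1, fun t ht htk => absurd htk (by omega), ?_⟩
    rwa [GConj.margAct_eq_of_K1_of_K2_one h1 h2]

lemma mem_Dstep_CR_iff {u : A → B → ℝ} {q : B → ℝ} {f : ℕ → ℝ} {S : Set (ℕ × A)}
    {T : Set (ℕ × B)} (hT : ∀ b, ((0 : ℕ), b) ∈ T) {k : ℕ} (hk : 1 ≤ k) (a : A) :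
    (k, a) ∈ Dstep u (CR q f) S T ↔
      (k, a) ∈ S ∧ a ∈ chStep u q f k (fun t => {b | (t, b) ∈ T}) := by
  constructor
  · rintro ⟨hS, hk0 | ⟨μ, ⟨h1, h2, hC⟩, hsupp, hBR⟩⟩
    · simp only at hk0
      omega
    · exact ⟨hS, μ, h2, hC, h1, fun t _ _ b hmt hcb => hsupp t b hmt hcb, hBR⟩
  · rintro ⟨hS, μ, h2, hC, h1, hsupp, hBR⟩
    refine ⟨hS, Or.inr ⟨μ, ⟨h1, h2, hC⟩, fun t b hmt hcb => ?_, hBR⟩⟩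
    rcases Nat.eq_zero_or_pos t with rfl | ht
    · exact hT b
    · exact hsupp t ht (h2 t hmt) b hmt hcb

variable (u1 : A → B → ℝ) (u2 : B → A → ℝ) {p1 : A → ℝ} {p2 : B → ℝ} {f : ℕ → ℝ}

lemma CHsol_eq_chStep (hp1 : IsDist p1) (hp2 : IsDist p2) (hf0 : f 0 ≠ 0) {k : ℕ}
    (hk : 1 ≤ k) :
    (CHsol u1 u2 p1 p2 f k).1 = chStep u1 p2 f k (fun t => (CHsol u1 u2 p1 p2 f t).2) ∧
      (CHsol u1 u2 p1 p2 f k).2 = chStep u2 p1 f k (fun t => (CHsol u1 u2 p1 p2 f t).1) := by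
  obtain ⟨j, rfl | rfl⟩ : ∃ j, k = 1 ∨ k = j + 2 := ⟨k - 2, by omega⟩
  · rw [chStep_one u1 hp2 hf0, chStep_one u2 hp1 hf0, CHsol]
    exact ⟨rfl, rfl⟩
  · rw [CHsol]
    exact ⟨rfl, rfl⟩

lemma CHsol_subset_CSet (hp1 : IsDist p1) (hp2 : IsDist p2) (hf0 : f 0 ≠ 0) (n : ℕ) {k : ℕ}
    (hk : 1 ≤ k) :
    (CHsol u1 u2 p1 p2 f k).1 ⊆ CSet u1 u2 p1 p2 f n k ∧
      (CHsol u1 u2 p1 p2 f k).2 ⊆ CSet2 u1 u2 p1 p2 f n k := by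
  induction n generalizing k with
  | zero => exact ⟨fun _ _ => Set.mem_univ _, fun _ _ => Set.mem_univ _⟩
  | succ n ih =>
    obtain ⟨hT1, hT2⟩ := zero_mem_DeltaRat u1 u2 (CR p2 f) (CR p1 f) n
    obtain ⟨hCH1, hCH2⟩ := CHsol_eq_chStep u1 u2 hp1 hp2 hf0 hk
    refine ⟨fun a ha => ?_, fun b hb => ?_⟩
    · refine (mem_Dstep_CR_iff hT2 hk a).2 ⟨(ih hk).1 ha, ?_⟩
      rw [hCH1] at ha
      exact chStep_mono (fun t ht _ => (ih ht).2) ha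
    · refine (mem_Dstep_CR_iff hT1 hk b).2 ⟨(ih hk).2 hb, ?_⟩
      rw [hCH2] at hb
      exact chStep_mono (fun t ht _ => (ih ht).1) hb

lemma CSet_subset_CHsol (hp1 : IsDist p1) (hp2 : IsDist p2) (hf0 : f 0 ≠ 0) {k : ℕ}
    (hk : 1 ≤ k) {n : ℕ} (hn : k ≤ n) :
    CSet u1 u2 p1 p2 f n k ⊆ (CHsol u1 u2 p1 p2 f k).1 ∧
      CSet2 u1 u2 p1 p2 f n k ⊆ (CHsol u1 u2 p1 p2 f k).2 := by
  induction k using Nat.strong_induction_on generalizing n with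
  | _ k ih =>
    obtain ⟨m, rfl⟩ : ∃ m, n = m + 1 := ⟨n - 1, by omega⟩
    obtain ⟨hT1, hT2⟩ := zero_mem_DeltaRat u1 u2 (CR p2 f) (CR p1 f) m
    obtain ⟨hCH1, hCH2⟩ := CHsol_eq_chStep u1 u2 hp1 hp2 hf0 hk
    have ih' : ∀ t, 0 < t → t < k →
        CSet u1 u2 p1 p2 f m t ⊆ (CHsol u1 u2 p1 p2 f t).1 ∧
          CSet2 u1 u2 p1 p2 f m t ⊆ (CHsol u1 u2 p1 p2 f t).2 :=
      fun t ht htk => ih t htk ht (by omega)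
    refine ⟨fun a ha => ?_, fun b hb => ?_⟩
    · rw [hCH1]
      exact chStep_mono (fun t ht htk => (ih' t ht htk).2) ((mem_Dstep_CR_iff hT2 hk a).1 ha).2
    · rw [hCH2]
      exact chStep_mono (fun t ht htk => (ih' t ht htk).1) ((mem_Dstep_CR_iff hT1 hk b).1 hb).2

end CognitiveHierarchy

/-- foundation for the Cognitive Hierarchy model: for `k ≥ 1` and
`n ≥ k`, the `n`-C-rationalizable actions of type `θ_{i,k}` equal CH level-`k`
behavior. -/
theorem C_equals_CH {A B : Type} [Fintype A] [Fintype B]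
    (u1 : A → B → ℝ) (u2 : B → A → ℝ) (p1 : A → ℝ) (p2 : B → ℝ)
    (hp1 : IsDist p1) (hp2 : IsDist p2) (f : ℕ → ℝ) (hf : FullDist f)
    (k : ℕ) (hk : 1 ≤ k) (n : ℕ) (hn : k ≤ n) :
    CSet u1 u2 p1 p2 f n k = (CHsol u1 u2 p1 p2 f k).1 ∧
    CSet2 u1 u2 p1 p2 f n k = (CHsol u1 u2 p1 p2 f k).2 := by
  have hf0 : f 0 ≠ 0 := (hf.1 0).ne'
  obtain ⟨hC1, hC2⟩ := CSet_subset_CHsol u1 u2 hp1 hp2 hf0 hk hn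
  obtain ⟨hCH1, hCH2⟩ := CHsol_subset_CSet u1 u2 hp1 hp2 hf0 n hk
  exact ⟨hC1.antisymm hCH1, hC2.antisymm hCH2⟩
end

section
/- In the 3×3 game with π_1, π_2 given by rows U, M, D and columns l, c, r with payoffs (U,l)=(3,2), (U,c)=(0,0), (U,r)=(0,1), (M,l)=(0,0), (M,c)=(3,2), (M,r)=(0,1), (D,l)=(9,2), (D,c)=(9,2), (D,r)=(9,0): for every full-support level distribution f, every anchor p, and all k, n ≥ 2, action r of player 2 is not n-C-rationalizable for type θ_{2,k}, even though r is justifiable (r ∈ R^1_2). -/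
open Finset

namespace St14Aux

def U1 : Fin 3 → Fin 3 → ℝ := fun a b => !![(3:ℝ), 0, 0; 0, 3, 0; 9, 9, 9] a b
def U2 : Fin 3 → Fin 3 → ℝ := fun b a => !![(2:ℝ), 0, 2; 0, 2, 2; 1, 1, 0] b a

lemma marg_nonneg {B : Type} [Fintype B] (μ : GConj B) (b : B) : 0 ≤ margAct μ b := by
  unfold margAct Finsupp.sum
  exact Finset.sum_nonneg fun t _ =>
    mul_nonneg (μ.m_nonneg t) ((μ.cond_dist t).1 b)

lemma marg_dist {B : Type} [Fintype B] (μ : GConj B) : IsDist (margAct μ) := by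
  refine ⟨marg_nonneg μ, ?_⟩
  unfold margAct Finsupp.sum
  rw [Finset.sum_comm]
  have h1 := μ.m_sum
  unfold Finsupp.sum at h1
  rw [← h1]
  apply Finset.sum_congr rfl
  intro t _
  rw [← Finset.mul_sum, (μ.cond_dist t).2, mul_one]

lemma br1_eq_D (ν : Fin 3 → ℝ) (hν : IsDist ν) (a : Fin 3) (h : isBR U1 ν a) :
    a = 2 := by
  obtain ⟨hpos, hsum⟩ := hν
  have h2 := h 2
  simp only [U1, Fin.sum_univ_three] at h2 hsum
  have e0 := hpos 0; have e1 := hpos 1; have e2 := hpos 2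
  fin_cases a <;> simp_all <;> linarith [hpos 0, hpos 1, hpos 2]

lemma not_br2_r (ν : Fin 3 → ℝ) (_ : IsDist ν) (hpos : 0 < ν 2)
    (h : isBR U2 ν 2) : False := by
  have h0 := h 0
  have h1 := h 1
  simp only [U2, Fin.sum_univ_three] at h0 h1
  norm_num [Matrix.cons_val_two, Matrix.vecHead, Matrix.vecTail] at h0 h1
  linarith

/-- After at least one round, any surviving pair of player 1 has type 0 or action D. -/
lemma p1_round {Δ1 : ℕ → GConj (Fin 3) → Prop} {Δ2 : ℕ → GConj (Fin 3) → Prop}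
    {u2 : Fin 3 → Fin 3 → ℝ} (m : ℕ) (t : ℕ) (a : Fin 3)
    (h : (t, a) ∈ (DeltaRat U1 u2 Δ1 Δ2 (m + 1)).1) : t = 0 ∨ a = 2 := by
  obtain ⟨-, h⟩ := h
  rcases h with h | ⟨μ, -, -, hBR⟩
  · exact Or.inl h
  · exact Or.inr (br1_eq_D _ (marg_dist μ) a hBR)

end St14Aux

/-- in the given 3×3 game, action `r` (index 2) of player 2 is
justifiable, but for every full-support level distribution, every anchor, and all
`k, n ≥ 2`, it is not `n`-C-rationalizable for type `θ_{2,k}`. -/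
theorem justifiable_not_robustly_C_rationalizable :
    let u1 : Fin 3 → Fin 3 → ℝ := fun a b => !![(3:ℝ), 0, 0; 0, 3, 0; 9, 9, 9] a b
    let u2 : Fin 3 → Fin 3 → ℝ := fun b a => !![(2:ℝ), 0, 2; 0, 2, 2; 1, 1, 0] b a
    ((2 : Fin 3) ∈ (Rseq u1 u2 1).2) ∧
    ∀ f : ℕ → ℝ, FullDist f → ∀ p1 p2 : Fin 3 → ℝ, IsDist p1 → IsDist p2 →
      ∀ k n : ℕ, 2 ≤ k → 2 ≤ n →
        (2 : Fin 3) ∉ CSet2 u1 u2 p1 p2 f n k := by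
  intro u1 u2
  constructor
  · -- r is justifiable
    refine ⟨trivial, ![(1:ℝ)/2, 1/2, 0], ⟨?_, ?_⟩, fun _ _ => trivial, ?_⟩
    · intro b; fin_cases b <;> norm_num
    · simp [Fin.sum_univ_three]; norm_num
    · intro a'
      fin_cases a' <;> simp [u2, Fin.sum_univ_three] <;> norm_num
  · intro f hf p1 p2 hp1 hp2 k n hk hn hmem
    obtain ⟨m, rfl⟩ : ∃ m, n = m + 2 := ⟨n - 2, by omega⟩
    obtain ⟨-, hstep⟩ := hmem
    rcases hstep with h0 | ⟨μ, ⟨-, -, hKC⟩, hsupp, hBR⟩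
    · omega
    · -- μ.m 1 > 0
      have hden : 0 < ∑ t' ∈ Finset.range k, f t' :=
        Finset.sum_pos (fun t _ => hf.1 t) ⟨0, Finset.mem_range.2 (by omega)⟩
      have hm1 : 0 < μ.m 1 := by
        rw [hKC 1 (by omega)]
        exact div_pos (hf.1 1) hden
      -- cond 1 concentrated on D
      have hcond : ∀ b : Fin 3, μ.cond 1 b ≠ 0 → b = 2 := by
        intro b hb
        have := hsupp 1 b (ne_of_gt hm1) hb
        rcases St14Aux.p1_round m 1 b this with h | h
        · omega
        · exact h
      have hc2 : μ.cond 1 2 = 1 := by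
        have hd := μ.cond_dist 1
        have hs := hd.2
        rw [Fin.sum_univ_three] at hs
        by_cases h0 : μ.cond 1 0 = 0
        · by_cases h1 : μ.cond 1 1 = 0
          · linarith
          · exact absurd (hcond 1 h1) (by decide)
        · exact absurd (hcond 0 h0) (by decide)
      -- margAct μ 2 > 0
      have hmpos : 0 < margAct μ 2 := by
        show (0:ℝ) < ∑ t ∈ μ.m.support, μ.m t * μ.cond t 2
        have h1s : (1 : ℕ) ∈ μ.m.support := Finsupp.mem_support_iff.2 (ne_of_gt hm1)
        have hle : μ.m 1 * μ.cond 1 2 ≤ ∑ t ∈ μ.m.support, μ.m t * μ.cond t 2 :=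
          Finset.single_le_sum (f := fun t => μ.m t * μ.cond t 2)
            (fun t _ => mul_nonneg (μ.m_nonneg t) ((μ.cond_dist t).1 2)) h1s
        rw [hc2, mul_one] at hle
        linarith
      exact St14Aux.not_br2_r _ (St14Aux.marg_dist μ) hmpos hBR
end

section
/- Generic robust characterization of C-rationalizability: if the finite two-player game G is generic (for every player and every justifiable action there is a conjecture making that action the unique best reply), then for every player i, every order n ≥ 1, and every level k ≥ 1, the union over all anchors p and all full-support level distributions f of the n-C-rationalizable actions of type θ_{i,k} equals R^1_i, the set of justifiable actions. -/
open Finset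

/-!
A level-`k` player who believes that the co-player's level-0 type follows the anchor `ν` and
that all higher levels play a fixed action `b₀` holds the conjecture
`c • ν + (1 - c) • δ_{b₀}` with `c = f^k(0) ∈ [f(0), 1]`. If `a` is the unique best reply to
`ν`, it remains a best reply on a neighbourhood of `ν`, so once `f(0)` is close to `1` it is a
best reply to this conjecture for every `k`. Doing the same for the co-player, with `b₀` a
unique best reply to its own anchor, the profile in which every level `k ≥ 1` plays `a`,
resp. `b₀`, survives every round of C-rationalizability.
-/

open Filter Topology

section BestReplies

variable {A B : Type} [Fintype A] [Fintype B]

lemma IsDist.nonempty {ν : B → ℝ} (hν : IsDist ν) : Nonempty B := by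
  obtain ⟨b, -, -⟩ := Finset.exists_ne_zero_of_sum_ne_zero (hν.2 ▸ one_ne_zero)
  exact ⟨b⟩

lemma isDist_pi_single [DecidableEq B] (b₀ : B) : IsDist (Pi.single b₀ (1 : ℝ)) :=
  ⟨fun b => by by_cases h : b = b₀ <;> simp [h], by simp⟩

lemma exists_isBR [Nonempty A] (u : A → B → ℝ) (ν : B → ℝ) : ∃ a, isBR u ν a :=
  Finite.exists_max fun a => ∑ b, ν b * u a b

lemma margAct_isDist (μ : GConj B) : IsDist (margAct μ) := by
  refine ⟨fun b => Finset.sum_nonneg fun t _ =>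
    mul_nonneg (μ.m_nonneg t) ((μ.cond_dist t).1 b), ?_⟩
  calc ∑ b, margAct μ b = ∑ t ∈ μ.m.support, μ.m t * ∑ b, μ.cond t b := by
        simp only [margAct, Finsupp.sum, Finset.mul_sum]
        exact Finset.sum_comm
    _ = 1 := by simpa [Finsupp.sum, (μ.cond_dist _).2] using μ.m_sum

lemma eventually_isBR_of_unique {u : A → B → ℝ} {ν : B → ℝ} {a : A} (hBR : isBR u ν a)
    (huniq : ∀ a', isBR u ν a' → a' = a) : ∀ᶠ ν' in 𝓝 ν, isBR u ν' a := by
  have hpay : ∀ a', Continuous fun ν' : B → ℝ => ∑ b, ν' b * u a' b := fun a' => by fun_prop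
  refine eventually_all.2 fun a' => ?_
  by_cases h : a' = a
  · exact .of_forall fun _ => h ▸ le_rfl
  · have hlt : ∑ b, ν b * u a' b < ∑ b, ν b * u a b :=
      (hBR a').lt_of_ne fun heq => h (huniq a' fun a'' => heq ▸ hBR a'')
    exact ((hpay a').continuousAt.eventually_lt (hpay a).continuousAt hlt).mono
      fun _ => le_of_lt

lemma eventually_isBR_mix {u : A → B → ℝ} {ν : B → ℝ} {a : A} (hBR : isBR u ν a)
    (huniq : ∀ a', isBR u ν a' → a' = a) (w : B → ℝ) :
    ∀ᶠ c in 𝓝 (1 : ℝ), isBR u (fun b => c * ν b + (1 - c) * w b) a := by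
  have hmix : Tendsto (fun c : ℝ => fun b => c * ν b + (1 - c) * w b) (𝓝 1) (𝓝 ν) := by
    have hcont : Continuous fun c : ℝ => fun b => c * ν b + (1 - c) * w b := by fun_prop
    simpa using hcont.tendsto 1
  exact hmix.eventually (eventually_isBR_of_unique hBR huniq)

end BestReplies

section LevelDistributions

variable {f : ℕ → ℝ}

lemma FullDist.sum_range_pos (hf : FullDist f) {k : ℕ} (hk : 0 < k) :
    0 < ∑ t ∈ Finset.range k, f t :=
  Finset.sum_pos (fun t _ => hf.1 t) ⟨0, Finset.mem_range.2 hk⟩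

lemma FullDist.sum_ftrunc (hf : FullDist f) {k : ℕ} (hk : 0 < k) :
    ∑ t ∈ Finset.range k, ftrunc f k t = 1 := by
  simp only [ftrunc, ← Finset.sum_div]
  exact div_self (hf.sum_range_pos hk).ne'

lemma FullDist.ftrunc_zero_mem_Icc (hf : FullDist f) {k : ℕ} (hk : 0 < k) :
    ftrunc f k 0 ∈ Set.Icc (f 0) 1 := by
  have hle : f 0 ≤ ∑ t ∈ Finset.range k, f t :=
    Finset.single_le_sum (fun t _ => (hf.1 t).le) (Finset.mem_range.2 hk)
  have hle_one : ∑ t ∈ Finset.range k, f t ≤ 1 :=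
    sum_le_hasSum _ (fun t _ => (hf.1 t).le) hf.2
  exact ⟨le_div_self (hf.1 0).le (hf.sum_range_pos hk) hle_one,
    div_le_one_of_le₀ hle (hf.sum_range_pos hk).le⟩

lemma fullDist_geometric {r : ℝ} (hr0 : 0 < r) (hr1 : r < 1) :
    FullDist fun t => (1 - r) * r ^ t := by
  refine ⟨fun t => mul_pos (by linarith) (pow_pos hr0 t), ?_⟩
  simpa [mul_inv_cancel₀ (sub_ne_zero.2 hr1.ne')] using
    (hasSum_geometric_of_lt_one hr0.le hr1).mul_left (1 - r)

lemma exists_fullDist_forall_ftrunc_zero {P : ℝ → Prop} (hP : ∀ᶠ c in 𝓝 (1 : ℝ), P c) :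
    ∃ f, FullDist f ∧ ∀ k, 0 < k → P (ftrunc f k 0) := by
  obtain ⟨ε, hε, hball⟩ := Metric.eventually_nhds_iff.1 hP
  set r := min (ε / 2) (1 / 2)
  have hr0 : 0 < r := by positivity
  have hrε : r < ε := (min_le_left _ _).trans_lt (half_lt_self hε)
  have hr1 : r < 1 := (min_le_right _ _).trans_lt (by norm_num)
  have hf := fullDist_geometric hr0 hr1
  refine ⟨_, hf, fun k hk => hball ?_⟩
  obtain ⟨h0, h1⟩ := hf.ftrunc_zero_mem_Icc hk
  rw [Real.dist_eq, abs_sub_lt_iff]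
  simp only [pow_zero, mul_one] at h0
  constructor <;> linarith

end LevelDistributions

section Conjectures

variable {B : Type} [Fintype B] {f : ℕ → ℝ} {k : ℕ}

lemma exists_gConj_ftrunc (hf : FullDist f) (hk : 0 < k) (σ : ℕ → B → ℝ)
    (hσ : ∀ t, IsDist (σ t)) :
    ∃ μ : GConj B, μ.cond = σ ∧ K2 k μ ∧ KC f k μ ∧
      margAct μ = fun b => ∑ t ∈ Finset.range k, ftrunc f k t * σ t b := by
  let m : ℕ →₀ ℝ := Finsupp.onFinset (Finset.range k) (fun t => if t < k then ftrunc f k t else 0)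
    fun t ht => Finset.mem_range.2 (of_not_not fun h => ht (if_neg h))
  have hm : ∀ t, m t = if t < k then ftrunc f k t else 0 := fun _ => rfl
  have hsum : ∀ g : ℕ → ℝ → ℝ, (∀ t, g t 0 = 0) →
      m.sum g = ∑ t ∈ Finset.range k, g t (ftrunc f k t) := fun g hg => by
    rw [Finsupp.onFinset_sum _ hg]
    exact Finset.sum_congr rfl fun t ht => by rw [if_pos (Finset.mem_range.1 ht)]
  refine ⟨⟨m, fun t => ?_, ?_, σ, hσ⟩, rfl, fun t ht => ?_, fun t ht => ?_, ?_⟩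
  · rw [hm]
    split_ifs
    exacts [div_nonneg (hf.1 t).le (hf.sum_range_pos hk).le, le_rfl]
  · rw [hsum _ fun _ => rfl]
    exact hf.sum_ftrunc hk
  · exact of_not_not fun h => ht (by rw [hm, if_neg h])
  · rw [hm, if_pos ht]
  · funext b
    exact hsum _ fun _ => zero_mul _

lemma exists_CR_mix {q w : B → ℝ} (hq : IsDist q) (hw : IsDist w) (hf : FullDist f)
    (hk : 0 < k) :
    ∃ μ : GConj B, CR q f k μ ∧ (∀ t, 0 < t → μ.cond t = w) ∧
      margAct μ = fun b => ftrunc f k 0 * q b + (1 - ftrunc f k 0) * w b := by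
  obtain ⟨μ, hcond, hK2, hKC, hmarg⟩ :=
    exists_gConj_ftrunc hf hk (fun t => if t = 0 then q else w)
      fun t => by split_ifs; exacts [hq, hw]
  refine ⟨μ, ⟨fun _ => by simp [hcond], hK2, hKC⟩, fun t ht => by simp [hcond, ht.ne'],
    hmarg.trans ?_⟩
  obtain ⟨j, rfl⟩ : ∃ j, k = j + 1 := ⟨k - 1, by omega⟩
  have htail : ∑ t ∈ Finset.range j, ftrunc f (j + 1) (t + 1) = 1 - ftrunc f (j + 1) 0 := by
    rw [← hf.sum_ftrunc hk, Finset.sum_range_succ']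
    ring
  funext b
  simp only [Finset.sum_range_succ', Nat.succ_ne_zero, if_false, if_true, ← Finset.sum_mul, htail]
  ring

end Conjectures

section Rationalizability

variable {A B : Type} [Fintype A] [Fintype B] (u1 : A → B → ℝ) (u2 : B → A → ℝ)

lemma zero_mem_deltaRat (Δ1 : ℕ → GConj B → Prop) (Δ2 : ℕ → GConj A → Prop) (n : ℕ) :
    (∀ a, ((0 : ℕ), a) ∈ (DeltaRat u1 u2 Δ1 Δ2 n).1) ∧
      ∀ b, ((0 : ℕ), b) ∈ (DeltaRat u1 u2 Δ1 Δ2 n).2 := by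
  induction n with
  | zero => exact ⟨fun _ => Set.mem_univ _, fun _ => Set.mem_univ _⟩
  | succ n ih => exact ⟨fun a => ⟨ih.1 a, Or.inl rfl⟩, fun b => ⟨ih.2 b, Or.inl rfl⟩⟩

lemma deltaRat_swap (Δ1 : ℕ → GConj B → Prop) (Δ2 : ℕ → GConj A → Prop) (n : ℕ) :
    DeltaRat u2 u1 Δ2 Δ1 n = ((DeltaRat u1 u2 Δ1 Δ2 n).2, (DeltaRat u1 u2 Δ1 Δ2 n).1) := by
  induction n with
  | zero => rfl
  | succ n ih => simp only [DeltaRat, ih]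

lemma cSet2_eq_cSet_swap (p1 : A → ℝ) (p2 : B → ℝ) (f : ℕ → ℝ) (n k : ℕ) :
    CSet2 u1 u2 p1 p2 f n k = CSet u2 u1 p2 p1 f n k := by
  simp only [CSet2, CSet, deltaRat_swap u1 u2]

lemma mem_rseq_one_of_mem_deltaRat {Δ1 : ℕ → GConj B → Prop} {Δ2 : ℕ → GConj A → Prop}
    {n k : ℕ} (hk : k ≠ 0) {a : A} (h : (k, a) ∈ (DeltaRat u1 u2 Δ1 Δ2 (n + 1)).1) :
    a ∈ (Rseq u1 u2 1).1 := by
  obtain ⟨-, h0 | ⟨μ, -, -, hbr⟩⟩ := h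
  · exact absurd h0 hk
  · exact ⟨Set.mem_univ a, margAct μ, margAct_isDist μ, fun b _ => Set.mem_univ b, hbr⟩

variable {u1 u2}

lemma mem_dstep_CR {q w : B → ℝ} (hq : IsDist q) (hw : IsDist w) {f : ℕ → ℝ}
    (hf : FullDist f) {k : ℕ} (hk : 0 < k) {a : A} {S : Set (ℕ × A)} {T : Set (ℕ × B)}
    (hS : (k, a) ∈ S) (hT0 : ∀ b, ((0 : ℕ), b) ∈ T)
    (hT : ∀ t b, 0 < t → t < k → w b ≠ 0 → (t, b) ∈ T)
    (hBR : isBR u1 (fun b => ftrunc f k 0 * q b + (1 - ftrunc f k 0) * w b) a) :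
    (k, a) ∈ Dstep u1 (CR q f) S T := by
  obtain ⟨μ, hCR, hcond, hmarg⟩ := exists_CR_mix hq hw hf hk
  refine ⟨hS, Or.inr ⟨μ, hCR, fun t b hm hc => ?_, hmarg ▸ hBR⟩⟩
  rcases Nat.eq_zero_or_pos t with rfl | ht
  · exact hT0 b
  · exact hT t b ht (hCR.2.1 t hm) (hcond t ht ▸ hc)

lemma mem_deltaRat_CR [DecidableEq A] [DecidableEq B] {p1 : A → ℝ} {p2 : B → ℝ}
    (hp1 : IsDist p1) (hp2 : IsDist p2) {f : ℕ → ℝ} (hf : FullDist f) {a : A} {b : B}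
    (ha : ∀ k, 0 < k →
      isBR u1 (fun b' => ftrunc f k 0 * p2 b' + (1 - ftrunc f k 0) * (Pi.single b 1 : B → ℝ) b') a)
    (hb : ∀ k, 0 < k →
      isBR u2 (fun a' => ftrunc f k 0 * p1 a' + (1 - ftrunc f k 0) * (Pi.single a 1 : A → ℝ) a') b)
    (n : ℕ) : ∀ k, 0 < k → (k, a) ∈ (DeltaRat u1 u2 (CR p2 f) (CR p1 f) n).1 ∧
      (k, b) ∈ (DeltaRat u1 u2 (CR p2 f) (CR p1 f) n).2 := by
  have eq_of_single_ne_zero {α : Type} [DecidableEq α] {x y : α}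
      (h : Pi.single (M := fun _ => ℝ) x 1 y ≠ 0) : y = x :=
    of_not_not fun hne => h (Pi.single_eq_of_ne hne 1)
  induction n with
  | zero => exact fun _ _ => ⟨Set.mem_univ _, Set.mem_univ _⟩
  | succ n ih =>
    intro k hk
    obtain ⟨hzero1, hzero2⟩ := zero_mem_deltaRat u1 u2 (CR p2 f) (CR p1 f) n
    refine ⟨mem_dstep_CR hp2 (isDist_pi_single b) hf hk (ih k hk).1 hzero2
      (fun t b' ht _ hne => ?_) (ha k hk),
      mem_dstep_CR hp1 (isDist_pi_single a) hf hk (ih k hk).2 hzero1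
      (fun t a' ht _ hne => ?_) (hb k hk)⟩
    · exact eq_of_single_ne_zero hne ▸ (ih t ht).2
    · exact eq_of_single_ne_zero hne ▸ (ih t ht).1

lemma cSet_union_eq_rseq_one
    (hgen1 : ∀ a ∈ (Rseq u1 u2 1).1, ∃ ν : B → ℝ, IsDist ν ∧ isBR u1 ν a ∧
      ∀ a', isBR u1 ν a' → a' = a)
    (hgen2 : ∀ b ∈ (Rseq u1 u2 1).2, ∃ ν : A → ℝ, IsDist ν ∧ isBR u2 ν b ∧
      ∀ b', isBR u2 ν b' → b' = b)
    {n : ℕ} (hn : 1 ≤ n) {k : ℕ} (hk : 1 ≤ k) :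
    {a : A | ∃ p1 : A → ℝ, ∃ p2 : B → ℝ, ∃ f : ℕ → ℝ,
        IsDist p1 ∧ IsDist p2 ∧ FullDist f ∧ a ∈ CSet u1 u2 p1 p2 f n k}
      = (Rseq u1 u2 1).1 := by
  classical
  ext a
  constructor
  · rintro ⟨p1, p2, f, -, -, -, ha⟩
    obtain ⟨m, rfl⟩ : ∃ m, n = m + 1 := ⟨n - 1, by omega⟩
    exact mem_rseq_one_of_mem_deltaRat u1 u2 (by omega) ha
  · intro ha
    obtain ⟨ν, hν, hBR, huniq⟩ := hgen1 a ha
    have := hν.nonempty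
    obtain ⟨b, hb⟩ := exists_isBR u2 (Pi.single a 1)
    obtain ⟨ν2, hν2, hBR2, huniq2⟩ :=
      hgen2 b ⟨Set.mem_univ b, _, isDist_pi_single a, fun a' _ => Set.mem_univ a', hb⟩
    obtain ⟨f, hf, hfk⟩ := exists_fullDist_forall_ftrunc_zero
      ((eventually_isBR_mix hBR huniq (Pi.single b 1)).and
        (eventually_isBR_mix hBR2 huniq2 (Pi.single a 1)))
    exact ⟨ν2, ν, f, hν2, hν, hf, (mem_deltaRat_CR hν2 hν hf (fun k hk => (hfk k hk).1)
      (fun k hk => (hfk k hk).2) n k hk).1⟩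

end Rationalizability

/-- generic robust characterization of C-rationalizability: in a generic
game, the union over all anchors and all full-support level distributions of the
`n`-C-rationalizable actions of type `θ_{i,k}` equals the justifiable actions. -/
theorem generic_robust_C_characterization {A B : Type} [Fintype A] [Fintype B]
    (u1 : A → B → ℝ) (u2 : B → A → ℝ)
    (hgen1 : ∀ a ∈ (Rseq u1 u2 1).1, ∃ ν : B → ℝ, IsDist ν ∧ isBR u1 ν a ∧
      ∀ a', isBR u1 ν a' → a' = a)
    (hgen2 : ∀ b ∈ (Rseq u1 u2 1).2, ∃ ν : A → ℝ, IsDist ν ∧ isBR u2 ν b ∧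
      ∀ b', isBR u2 ν b' → b' = b)
    (n : ℕ) (hn : 1 ≤ n) (k : ℕ) (hk : 1 ≤ k) :
    {a : A | ∃ p1 : A → ℝ, ∃ p2 : B → ℝ, ∃ f : ℕ → ℝ,
        IsDist p1 ∧ IsDist p2 ∧ FullDist f ∧ a ∈ CSet u1 u2 p1 p2 f n k}
      = (Rseq u1 u2 1).1 ∧
    {b : B | ∃ p1 : A → ℝ, ∃ p2 : B → ℝ, ∃ f : ℕ → ℝ,
        IsDist p1 ∧ IsDist p2 ∧ FullDist f ∧ b ∈ CSet2 u1 u2 p1 p2 f n k}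
      = (Rseq u1 u2 1).2 := by
  refine ⟨cSet_union_eq_rseq_one hgen1 hgen2 hn hk,
    Eq.trans ?_ (cSet_union_eq_rseq_one (u1 := u2) (u2 := u1) hgen2 hgen1 hn hk)⟩
  ext b
  simp only [Set.mem_ofPred_eq, cSet2_eq_cSet_swap]
  exact ⟨fun ⟨p1, p2, f, h1, h2, hf, hb⟩ => ⟨p2, p1, f, h2, h1, hf, hb⟩,
    fun ⟨p2, p1, f, h2, h1, hf, hb⟩ => ⟨p1, p2, f, h1, h2, hf, hb⟩⟩
end

section
/- In the 3×3 game with payoffs (U,l)=(3,2), (U,c)=(2,1), (U,r)=(1,0); (M,l)=(2,2), (M,c)=(3,1), (M,r)=(2,0); (D,l)=(1,1), (D,c)=(1,2), (D,r)=(3,0): with anchor p = (δ_D, δ_r) and the level distribution f given by f(0) = (1−2ε)/(1−ε) and f(k) = ε^k for k ≥ 1, where ε ∈ (0, 1/4), the action D is n-C-rationalizable for player 1's type θ_{1,k} for every k, n ≥ 1; since D ∉ R^2_1, for every n ≥ 2 no level k satisfies C^n_{1,p,f}(θ_{1,k}) ⊆ R^n_1. -/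
open Finset

/-- The type-marginal given by truncating `f` at `k`, as a finsupp. -/
noncomputable def truncFinsupp (f : ℕ → ℝ) (k : ℕ) : ℕ →₀ ℝ :=
  Finsupp.onFinset (Finset.range k) (fun t => if t < k then ftrunc f k t else 0)
    (fun t h => by
      by_cases hk : t < k
      · exact Finset.mem_range.2 hk
      · simp [hk] at h)

lemma truncFinsupp_apply (f : ℕ → ℝ) (k t : ℕ) :
    truncFinsupp f k t = if t < k then ftrunc f k t else 0 := rfl

lemma truncFinsupp_sum (f : ℕ → ℝ) (k : ℕ) (g : ℕ → ℝ → ℝ) (hg : ∀ t, g t 0 = 0) :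
    (truncFinsupp f k).sum g = ∑ t ∈ Finset.range k, g t (ftrunc f k t) := by
  rw [show truncFinsupp f k = Finsupp.onFinset (Finset.range k)
      (fun t => if t < k then ftrunc f k t else 0) _ from rfl,
    Finsupp.sum_of_support_subset _ Finsupp.support_onFinset_subset g (fun i _ => hg i)]
  exact Finset.sum_congr rfl fun t ht => by
    rw [Finsupp.onFinset_apply, if_pos (Finset.mem_range.1 ht)]

lemma Rseq_succ_subset {A B : Type} [Fintype A] [Fintype B]
    (u1 : A → B → ℝ) (u2 : B → A → ℝ) (n : ℕ) :
    (Rseq u1 u2 (n+1)).1 ⊆ (Rseq u1 u2 n).1 := fun a ha => ha.1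


/-- Build a Ĝ-conjecture with type-marginal `ftrunc f k` and given conditionals. -/
noncomputable def mkGConj {B : Type} [Fintype B] (f : ℕ → ℝ) (k : ℕ) (hk : 1 ≤ k)
    (hf : ∀ t, 0 < f t) (cond : ℕ → B → ℝ) (hcond : ∀ t, IsDist (cond t)) : GConj B where
  m := truncFinsupp f k
  m_nonneg := fun t => by
    rw [truncFinsupp_apply]
    split
    · exact div_nonneg (hf t).le
        (Finset.sum_pos (fun t _ => hf t) ⟨0, Finset.mem_range.2 hk⟩).le
    · exact le_refl 0
  m_sum := by
    rw [truncFinsupp_sum _ _ _ (fun t => rfl)]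
    unfold ftrunc
    rw [← Finset.sum_div,
      div_self (ne_of_gt (Finset.sum_pos (fun t _ => hf t) ⟨0, Finset.mem_range.2 hk⟩))]
  cond := cond
  cond_dist := hcond

lemma mkGConj_m {B : Type} [Fintype B] (f : ℕ → ℝ) (k : ℕ) (hk : 1 ≤ k)
    (hf : ∀ t, 0 < f t) (cond : ℕ → B → ℝ) (hcond : ∀ t, IsDist (cond t)) (t : ℕ) :
    (mkGConj f k hk hf cond hcond).m t = if t < k then ftrunc f k t else 0 :=
  truncFinsupp_apply f k t

lemma mkGConj_margAct {B : Type} [Fintype B] (f : ℕ → ℝ) (k : ℕ) (hk : 1 ≤ k)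
    (hf : ∀ t, 0 < f t) (cond : ℕ → B → ℝ) (hcond : ∀ t, IsDist (cond t)) (b : B) :
    margAct (mkGConj f k hk hf cond hcond) b =
      ∑ t ∈ Finset.range k, ftrunc f k t * cond t b :=
  truncFinsupp_sum f k _ (fun t => zero_mul _)

lemma mkGConj_K2 {B : Type} [Fintype B] (f : ℕ → ℝ) (k : ℕ) (hk : 1 ≤ k)
    (hf : ∀ t, 0 < f t) (cond : ℕ → B → ℝ) (hcond : ∀ t, IsDist (cond t)) :
    K2 k (mkGConj f k hk hf cond hcond) := by
  intro t ht
  rw [mkGConj_m] at ht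
  by_cases h : t < k
  · exact h
  · rw [if_neg h] at ht
    exact absurd rfl ht

lemma mkGConj_KC {B : Type} [Fintype B] (f : ℕ → ℝ) (k : ℕ) (hk : 1 ≤ k)
    (hf : ∀ t, 0 < f t) (cond : ℕ → B → ℝ) (hcond : ∀ t, IsDist (cond t)) :
    KC f k (mkGConj f k hk hf cond hcond) := by
  intro t ht
  rw [mkGConj_m, if_pos ht]

lemma sum_weight_ite (k : ℕ) (hk : 1 ≤ k) (w : ℕ → ℝ) (x y : ℝ) :
    ∑ t ∈ Finset.range k, w t * (if t = 0 then x else y) =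
      w 0 * x + ((∑ t ∈ Finset.range k, w t) - w 0) * y := by
  have h : ∀ t ∈ Finset.range k, w t * (if t = 0 then x else y) =
      (if t = 0 then w t * x - w t * y else 0) + w t * y := by
    intro t _
    split <;> ring
  rw [Finset.sum_congr rfl h, Finset.sum_add_distrib,
    Finset.sum_ite_eq' (Finset.range k) 0 (fun t => w t * x - w t * y),
    if_pos (Finset.mem_range.2 hk), ← Finset.sum_mul]
  ring

/-- in the running-example game with anchor `(δ_D, δ_r)` and the
"lexicographic" level distribution `f_ε`, `D` is `n`-C-rationalizable for every type
`θ_{1,k}` with `k, n ≥ 1`; since `D ∉ R^2_1`, for every `n ≥ 2` no level `k` is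
consistent with `n`-rationalizability. -/
theorem CH_inconsistency_example (ε : ℝ) (hε0 : 0 < ε) (hε4 : ε < 1/4) :
    let u1 : Fin 3 → Fin 3 → ℝ := fun a b => !![(3:ℝ), 2, 1; 2, 3, 2; 1, 1, 3] a b
    let u2 : Fin 3 → Fin 3 → ℝ := fun b a => !![(2:ℝ), 2, 1; 1, 1, 2; 0, 0, 0] b a
    let p1 : Fin 3 → ℝ := fun a => if a = 2 then 1 else 0
    let p2 : Fin 3 → ℝ := fun b => if b = 2 then 1 else 0
    let f : ℕ → ℝ := fun t => if t = 0 then (1 - 2 * ε) / (1 - ε) else ε ^ t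
    (∀ k n : ℕ, 1 ≤ k → 1 ≤ n → (2 : Fin 3) ∈ CSet u1 u2 p1 p2 f n k) ∧
    (2 : Fin 3) ∉ (Rseq u1 u2 2).1 ∧
    (∀ n : ℕ, 2 ≤ n → ∀ k : ℕ, 1 ≤ k →
      ¬ (CSet u1 u2 p1 p2 f n k ⊆ (Rseq u1 u2 n).1)) := by
  intro u1 u2 p1 p2 f
  have hε1 : ε < 1 := by linarith
  have h1e : (0:ℝ) < 1 - ε := by linarith
  have hf0v : f 0 = (1 - 2*ε)/(1-ε) := by simp [f]
  have hf0 : (2:ℝ)/3 < f 0 := by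
    rw [hf0v, lt_div_iff₀ h1e]; linarith
  have hfpos : ∀ t, 0 < f t := by
    intro t
    cases t with
    | zero => rw [hf0v]; exact div_pos (by linarith) h1e
    | succ t =>
      have : f (t+1) = ε ^ (t+1) := by simp [f]
      rw [this]; positivity
  have hSpos : ∀ k, 1 ≤ k → 0 < ∑ t' ∈ Finset.range k, f t' := fun k hk =>
    Finset.sum_pos (fun t _ => hfpos t) ⟨0, Finset.mem_range.2 hk⟩
  have hSle : ∀ k, 1 ≤ k → ∑ t' ∈ Finset.range k, f t' ≤ 1 := by
    intro k hk
    obtain ⟨k', rfl⟩ : ∃ k', k = k' + 1 := ⟨k - 1, (Nat.succ_pred_eq_of_pos hk).symm⟩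
    rw [Finset.sum_range_succ']
    have hf1 : ∀ i ∈ Finset.range k', f (i+1) = ε * ε ^ i := by
      intro i _; simp [f, pow_succ, mul_comm]
    rw [Finset.sum_congr rfl hf1, ← Finset.mul_sum, geom_sum_eq (ne_of_lt hε1), hf0v]
    have hpk : (0:ℝ) < ε ^ k' := pow_pos hε0 k'
    have he : (ε ^ k' - 1)/(ε - 1) = (1 - ε ^ k')/(1 - ε) := by
      rw [div_eq_div_iff (by linarith) (by linarith)]; ring
    rw [he]
    have h2 : ε * ((1 - ε ^ k') / (1 - ε)) + (1 - 2*ε)/(1-ε)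
        = (1 - ε - ε * ε ^ k')/(1-ε) := by
      field_simp; ring
    rw [h2, div_le_one h1e]
    nlinarith
  have hm0 : ∀ k, 1 ≤ k → (2:ℝ)/3 < ftrunc f k 0 := by
    intro k hk
    have hS := hSpos k hk
    have hle : f 0 ≤ ftrunc f k 0 := by
      rw [ftrunc, le_div_iff₀ hS]
      calc f 0 * ∑ t' ∈ Finset.range k, f t'
          ≤ f 0 * 1 := mul_le_mul_of_nonneg_left (hSle k hk) (hfpos 0).le
        _ = f 0 := mul_one _
    linarith
  have hts : ∀ k, 1 ≤ k → ∑ t ∈ Finset.range k, ftrunc f k t = 1 := by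
    intro k hk
    unfold ftrunc
    rw [← Finset.sum_div, div_self (ne_of_gt (hSpos k hk))]
  have hdelta : ∀ x : Fin 3, IsDist (fun b : Fin 3 => if b = x then (1:ℝ) else 0) := by
    intro x
    constructor
    · intro b; dsimp only; split <;> norm_num
    · fin_cases x <;> simp [Fin.sum_univ_three]
  have hp2 : IsDist p2 := hdelta 2
  have hp1 : IsDist p1 := hdelta 2
  set c1 : ℕ → Fin 3 → ℝ := fun t => if t = 0 then p2 else fun b => if b = 1 then 1 else 0
    with hc1
  set c2 : ℕ → Fin 3 → ℝ := fun _ => p1 with hc2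
  have hc1d : ∀ t, IsDist (c1 t) := by
    intro t
    rw [hc1]
    by_cases h : t = 0
    · simp only [h, ite_true]; exact hp2
    · simp only [if_neg h]; exact hdelta 1
  have hc2d : ∀ t, IsDist (c2 t) := fun t => hp1
  have key : ∀ n, (∀ a : Fin 3, ((0:ℕ), a) ∈ (DeltaRat u1 u2 (CR p2 f) (CR p1 f) n).1) ∧
      (∀ b : Fin 3, ((0:ℕ), b) ∈ (DeltaRat u1 u2 (CR p2 f) (CR p1 f) n).2) ∧
      (∀ k, 1 ≤ k → ((k, (2:Fin 3)) ∈ (DeltaRat u1 u2 (CR p2 f) (CR p1 f) n).1 ∧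
        (k, (1:Fin 3)) ∈ (DeltaRat u1 u2 (CR p2 f) (CR p1 f) n).2)) := by
    intro n
    induction n with
    | zero => exact ⟨fun a => Set.mem_univ _, fun b => Set.mem_univ _,
        fun k _ => ⟨Set.mem_univ _, Set.mem_univ _⟩⟩
    | succ n ih =>
      obtain ⟨ih1, ih2, ih3⟩ := ih
      refine ⟨fun a => ⟨ih1 a, Or.inl rfl⟩, fun b => ⟨ih2 b, Or.inl rfl⟩, ?_⟩
      intro k hk
      constructor
      · -- player 1 type k plays D = 2
        refine ⟨(ih3 k hk).1, Or.inr ⟨mkGConj f k hk hfpos c1 hc1d, ⟨?_, ?_, ?_⟩, ?_, ?_⟩⟩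
        · intro _; rfl
        · exact mkGConj_K2 f k hk hfpos c1 hc1d
        · exact mkGConj_KC f k hk hfpos c1 hc1d
        · -- support condition
          intro t b hm hcb
          have ht : t < k := mkGConj_K2 f k hk hfpos c1 hc1d t hm
          cases t with
          | zero => exact ih2 b
          | succ t =>
            have hb : b = 1 := by
              by_contra hb
              apply hcb
              show c1 (t+1) b = 0
              rw [hc1]
              simp [hb]
            rw [hb]
            exact (ih3 (t+1) (Nat.succ_le_succ (Nat.zero_le t))).2
        · -- D is a best reply
          have hmarg : ∀ b : Fin 3, margAct (mkGConj f k hk hfpos c1 hc1d) b =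
              ftrunc f k 0 * p2 b +
                (1 - ftrunc f k 0) * (if b = 1 then 1 else 0) := by
            intro b
            rw [mkGConj_margAct]
            have hcg : ∀ t ∈ Finset.range k, ftrunc f k t * c1 t b =
                ftrunc f k t * (if t = 0 then p2 b else if b = 1 then (1:ℝ) else 0) := by
              intro t _
              rw [hc1]
              by_cases h : t = 0 <;> simp [h]
            rw [Finset.sum_congr rfl hcg, sum_weight_ite k hk _ _ _, hts k hk]
          have hm0k := hm0 k hk
          have hν0 : margAct (mkGConj f k hk hfpos c1 hc1d) 0 = 0 := by
            rw [hmarg]; simp [p2]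
          have hν1 : margAct (mkGConj f k hk hfpos c1 hc1d) 1 = 1 - ftrunc f k 0 := by
            rw [hmarg]; simp [p2]
          have hν2 : margAct (mkGConj f k hk hfpos c1 hc1d) 2 = ftrunc f k 0 := by
            rw [hmarg]; simp [p2]
          intro a'
          fin_cases a' <;>
            simp only [Fin.sum_univ_three, hν0, hν1, hν2, u1] <;>
            norm_num [Matrix.cons_val_zero, Matrix.cons_val_one, Matrix.cons_val_two, Matrix.tail_cons, Matrix.head_cons] <;>
            linarith
      · -- player 2 type k plays c = 1
        refine ⟨(ih3 k hk).2, Or.inr ⟨mkGConj f k hk hfpos c2 hc2d, ⟨?_, ?_, ?_⟩, ?_, ?_⟩⟩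
        · intro _; rfl
        · exact mkGConj_K2 f k hk hfpos c2 hc2d
        · exact mkGConj_KC f k hk hfpos c2 hc2d
        · intro t a hm hca
          have ha : a = 2 := by
            by_contra ha
            apply hca
            show p1 a = 0
            simp [p1, ha]
          cases t with
          | zero => exact ih1 a
          | succ t =>
            rw [ha]
            exact (ih3 (t+1) (Nat.succ_le_succ (Nat.zero_le t))).1
        · have hmarg : ∀ a : Fin 3, margAct (mkGConj f k hk hfpos c2 hc2d) a = p1 a := by
            intro a
            rw [mkGConj_margAct]
            rw [show (∑ t ∈ Finset.range k, ftrunc f k t * c2 t a)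
                = (∑ t ∈ Finset.range k, ftrunc f k t) * p1 a from
              (Finset.sum_mul _ _ _).symm]
            rw [hts k hk, one_mul]
          intro b'
          simp only [Fin.sum_univ_three, hmarg]
          fin_cases b' <;> simp [p1, u2] <;> norm_num
  have hR1r : (2:Fin 3) ∉ (Rseq u1 u2 1).2 := by
    rintro ⟨-, ν, hν, -, hBR⟩
    have h := hBR 0
    simp only [Fin.sum_univ_three, u2] at h
    norm_num [Matrix.cons_val_zero, Matrix.cons_val_one, Matrix.cons_val_two, Matrix.tail_cons, Matrix.head_cons] at h
    have h0 := hν.1 0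
    have h1 := hν.1 1
    have h2 := hν.1 2
    have hs := hν.2
    rw [Fin.sum_univ_three] at hs
    linarith
  have hR2 : (2:Fin 3) ∉ (Rseq u1 u2 2).1 := by
    rintro ⟨-, ν, hν, hsupp, hBR⟩
    have hν2 : ν 2 = 0 := by
      by_contra h
      exact hR1r (hsupp 2 h)
    have h := hBR 0
    simp only [Fin.sum_univ_three, u1] at h
    norm_num [Matrix.cons_val_zero, Matrix.cons_val_one, Matrix.cons_val_two, Matrix.tail_cons, Matrix.head_cons] at h
    have h0 := hν.1 0
    have h1 := hν.1 1
    have hs := hν.2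
    rw [Fin.sum_univ_three] at hs
    linarith
  have part1 : ∀ k n : ℕ, 1 ≤ k → 1 ≤ n → (2 : Fin 3) ∈ CSet u1 u2 p1 p2 f n k :=
    fun k n hk _ => ((key n).2.2 k hk).1
  refine ⟨part1, hR2, ?_⟩
  intro n hn k hk hsub
  have hmono : ∀ m, (2:Fin 3) ∉ (Rseq u1 u2 (m + 2)).1 := by
    intro m
    induction m with
    | zero => exact hR2
    | succ m ihm => exact fun hmem => ihm (Rseq_succ_subset u1 u2 (m+2) hmem)
  obtain ⟨m, rfl⟩ : ∃ m, n = m + 2 := ⟨n - 2, by omega⟩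
  exact hmono m (hsub (part1 k (m+2) hk (by omega)))
end
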